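/- arXiv:1706.00722 — 4 statements merged into one kernel-verified Lean document; each statement's English description precedes it below -/
import Mathlib

section
/- (Lemma 3, general form) Let 0 < α₁ ≤ α₂ and 0 < f^sc ≤ f^ed, and fix total demand d > 0. Then for all d₂ ∈ [0, d], PoS(d - d₂, d₂) ≤ PoS(d - min(d, f^ed), min(d, f^ed)). That is, over all splits of fixed total demand d, the price of security is maximized by putting demand min(d, f^ed) at the expensive node and the remainder at the cheap node. -/
/-
With total demand `d` fixed, the cheap generator serves everything up to the transfer limit `f`,
so `cost f (d - d₂) d₂ = α₁ d + (α₂ - α₁) (d₂ - f)⁺`. At `d₂ = min d f^ed` the non-secure cost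
is the bare `α₁ d`, and for any other split the secure excess `(d₂ - f^sc)⁺` is at most the
non-secure excess `(d₂ - f^ed)⁺` plus the secure excess `(min d f^ed - f^sc)⁺` of the extremal
split; a cross-multiplication finishes the comparison of the two ratios.
-/

/-- Optimal 2-bus dispatch cost with transfer limit `f`. -/
noncomputable def cost (α₁ α₂ f d₁ d₂ : ℝ) : ℝ :=
  α₁ * (d₁ + min f d₂) + α₂ * max (d₂ - f) 0

/-- Price of security. -/
noncomputable def PoS (α₁ α₂ fsc fed d₁ d₂ : ℝ) : ℝ :=
  cost α₁ α₂ fsc d₁ d₂ / cost α₁ α₂ fed d₁ d₂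

lemma cost_sub_self (α₁ α₂ f d d₂ : ℝ) :
    cost α₁ α₂ f (d - d₂) d₂ = α₁ * d + (α₂ - α₁) * max (d₂ - f) 0 := by
  unfold cost
  rcases le_total d₂ f with h | h
  · rw [min_eq_right h, max_eq_right (by linarith)]; ring
  · rw [min_eq_left h, max_eq_left (by linarith)]; ring

lemma max_sub_zero_le_add {x y a b : ℝ} (hxy : x ≤ y) :
    max (x - a) 0 ≤ max (x - b) 0 + max (min y b - a) 0 := by
  have hx : x - min y b ≤ max (x - b) 0 := by
    rcases min_choice y b with h | h <;> rw [h]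
    · exact (sub_nonpos.2 hxy).trans (le_max_right _ _)
    · exact le_max_left _ _
  refine max_le ?_ (add_nonneg (le_max_right _ _) (le_max_right _ _))
  linarith [le_max_left (min y b - a) 0]

lemma add_mul_div_add_mul_le {A β m₁ m₂ M : ℝ} (hA : 0 < A) (hβ : 0 ≤ β) (hm₂ : 0 ≤ m₂)
    (hM : 0 ≤ M) (h : m₁ ≤ m₂ + M) :
    (A + β * m₁) / (A + β * m₂) ≤ (A + β * M) / A := by
  rw [div_le_div_iff₀ (by positivity) hA]
  calc (A + β * m₁) * A ≤ (A + β * (m₂ + M)) * A := by gcongr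
    _ ≤ (A + β * M) * (A + β * m₂) := by nlinarith [mul_nonneg (mul_nonneg hβ hβ) (mul_nonneg hM hm₂)]

theorem stmt_9_general (α₁ α₂ fsc fed d : ℝ)
    (hα₁ : 0 < α₁) (hα : α₁ ≤ α₂)
    (hd : 0 < d) :
    ∀ d₂ ∈ Set.Icc (0 : ℝ) d,
      PoS α₁ α₂ fsc fed (d - d₂) d₂ ≤
        PoS α₁ α₂ fsc fed (d - min d fed) (min d fed) := by
  rintro d₂ ⟨-, hd₂⟩
  have hopt : max (min d fed - fed) 0 = 0 :=
    max_eq_right (sub_nonpos.2 (min_le_right d fed))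
  simp only [PoS, cost_sub_self, hopt, mul_zero, add_zero]
  exact add_mul_div_add_mul_le (by positivity) (sub_nonneg.2 hα) (le_max_right _ _)
    (le_max_right _ _) (max_sub_zero_le_add hd₂)

theorem stmt_9 (α₁ α₂ fsc fed d : ℝ)
    (hα₁ : 0 < α₁) (hα : α₁ ≤ α₂) (hfsc : 0 < fsc) (hf : fsc ≤ fed)
    (hd : 0 < d) :
    ∀ d₂ ∈ Set.Icc (0 : ℝ) d,
      PoS α₁ α₂ fsc fed (d - d₂) d₂ ≤
        PoS α₁ α₂ fsc fed (d - min d fed) (min d fed) :=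
  stmt_9_general α₁ α₂ fsc fed d hα₁ hα hd
end

section
/- (Theorem 1, worst-case price of security) Let 0 < α₁ ≤ α₂ and 0 < f^sc ≤ f^ed. Then sup over all (d₁, d₂) with d₁, d₂ ≥ 0, d₁ + d₂ > 0 of PoS(d₁, d₂) is attained at (d₁, d₂) = (0, f^ed), and equals α₂/α₁ - (α₂ - α₁)·f^sc/(α₁·f^ed). -/
lemma cost_eq (α₁ α₂ f d₁ d₂ : ℝ) :
    cost α₁ α₂ f d₁ d₂ = α₁ * (d₁ + d₂) + (α₂ - α₁) * max (d₂ - f) 0 := by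
  unfold cost
  rcases le_total d₂ f with h | h
  · rw [min_eq_right h, max_eq_right (by linarith)]
    ring
  · rw [min_eq_left h, max_eq_left (by linarith)]
    ring

lemma cost_pos {α₁ α₂ f d₁ d₂ : ℝ} (hα₁ : 0 < α₁) (hα : α₁ ≤ α₂)
    (hd : 0 < d₁ + d₂) : 0 < cost α₁ α₂ f d₁ d₂ := by
  rw [cost_eq]
  have : 0 ≤ (α₂ - α₁) * max (d₂ - f) 0 := mul_nonneg (by linarith) (le_max_right _ _)
  nlinarith

lemma mul_max_sub_zero_sub_le {a b x : ℝ} (ha : 0 ≤ a) (hab : a ≤ b) (hx : 0 ≤ x) :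
    b * (max (x - a) 0 - max (x - b) 0) ≤ (b - a) * x := by
  rcases le_total x a with h₁ | h₁
  · rw [max_eq_right (by linarith), max_eq_right (by linarith)]
    nlinarith
  rcases le_total x b with h₂ | h₂
  · rw [max_eq_left (by linarith), max_eq_right (by linarith)]
    nlinarith
  · rw [max_eq_left (by linarith), max_eq_left (by linarith)]
    nlinarith

section

variable {α₁ α₂ fsc fed : ℝ}

lemma PoS_zero_fed (hf : fsc ≤ fed) :
    PoS α₁ α₂ fsc fed 0 fed = (α₁ * fed + (α₂ - α₁) * (fed - fsc)) / (α₁ * fed) := by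
  rw [PoS, cost_eq, cost_eq, sub_self, max_self, max_eq_left (sub_nonneg.2 hf)]
  ring

lemma PoS_le_PoS_zero_fed (hα₁ : 0 < α₁) (hα : α₁ ≤ α₂) (hfsc : 0 < fsc) (hf : fsc ≤ fed)
    {d₁ d₂ : ℝ} (hd₁ : 0 ≤ d₁) (hd₂ : 0 ≤ d₂) (hd : 0 < d₁ + d₂) :
    PoS α₁ α₂ fsc fed d₁ d₂ ≤ PoS α₁ α₂ fsc fed 0 fed := by
  have hfed : 0 < fed := hfsc.trans_le hf
  have hβ : 0 ≤ α₂ - α₁ := sub_nonneg.2 hα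
  set ced := cost α₁ α₂ fed d₁ d₂
  set g := max (d₂ - fsc) 0 - max (d₂ - fed) 0
  have hsc : cost α₁ α₂ fsc d₁ d₂ = ced + (α₂ - α₁) * g := by
    simp only [ced, g, cost_eq]
    ring
  have hg : fed * g ≤ (fed - fsc) * (d₁ + d₂) :=
    (mul_max_sub_zero_sub_le hfsc.le hf hd₂).trans
      (mul_le_mul_of_nonneg_left (by linarith) (sub_nonneg.2 hf))
  have hced : α₁ * (d₁ + d₂) ≤ ced := by
    simp only [ced, cost_eq]
    exact le_add_of_nonneg_right (mul_nonneg hβ (le_max_right _ _))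
  rw [PoS_zero_fed hf, PoS, div_le_div_iff₀ (cost_pos hα₁ hα hd) (by positivity), hsc]
  calc (ced + (α₂ - α₁) * g) * (α₁ * fed)
      = ced * (α₁ * fed) + (α₂ - α₁) * α₁ * (fed * g) := by ring
    _ ≤ ced * (α₁ * fed) + (α₂ - α₁) * α₁ * ((fed - fsc) * (d₁ + d₂)) := by gcongr
    _ = ced * (α₁ * fed) + (α₂ - α₁) * (fed - fsc) * (α₁ * (d₁ + d₂)) := by ring
    _ ≤ ced * (α₁ * fed) + (α₂ - α₁) * (fed - fsc) * ced := by
        have : 0 ≤ fed - fsc := sub_nonneg.2 hf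
        gcongr
    _ = (α₁ * fed + (α₂ - α₁) * (fed - fsc)) * ced := by ring

end

theorem stmt_11 (α₁ α₂ fsc fed : ℝ)
    (hα₁ : 0 < α₁) (hα : α₁ ≤ α₂) (hfsc : 0 < fsc) (hf : fsc ≤ fed) :
    IsGreatest
      {r : ℝ | ∃ d₁ d₂ : ℝ, 0 ≤ d₁ ∧ 0 ≤ d₂ ∧ 0 < d₁ + d₂ ∧
        r = PoS α₁ α₂ fsc fed d₁ d₂}
      (PoS α₁ α₂ fsc fed 0 fed) ∧
    PoS α₁ α₂ fsc fed 0 fed = α₂ / α₁ - (α₂ - α₁) * fsc / (α₁ * fed) := by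
  have hfed : 0 < fed := hfsc.trans_le hf
  refine ⟨⟨⟨0, fed, le_rfl, hfed.le, by simpa using hfed, rfl⟩, ?_⟩, ?_⟩
  · rintro r ⟨d₁, d₂, hd₁, hd₂, hd, rfl⟩
    exact PoS_le_PoS_zero_fed hα₁ hα hfsc hf hd₁ hd₂ hd
  · rw [PoS_zero_fed hf]
    field_simp
    ring
end

section
/- (Optimality of the greedy dispatch for the 2-bus ED) Suppose 0 < α₁ ≤ α₂, d₁, d₂ ≥ 0, f > 0, and q̄₁ ≥ d₁ + d₂. Then the point (q₁*, q₂*) = (d₁ + min(f, d₂), max(d₂ - f, 0)) minimizes α₁q₁ + α₂q₂ over all (q₁, q₂) with 0 ≤ q₁ ≤ q̄₁, 0 ≤ q₂, q₁ + q₂ = d₁ + d₂, and |q₁ - d₁| ≤ f; the optimal value is α₁(d₁ + min(f, d₂)) + α₂·max(d₂ - f, 0). -/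
/-! The cheap generator serves its own load and exports as much of the remote load as the
transfer limit allows; only the remainder `max (d₂ - f) 0` is bought from the expensive one.
Since every feasible dispatch has total output `d₁ + d₂`, its cost is
`α₁ (d₁ + d₂) + (α₂ - α₁) q₂`, which is monotone in `q₂`, and the transfer constraint forces
`q₂ ≥ d₂ - f`. -/

section Dispatch

variable {R : Type*}

theorem min_add_max_sub_zero [AddCommGroup R] [LinearOrder R] [IsOrderedAddMonoid R]
    (f d : R) : min f d + max (d - f) 0 = d := by
  rcases le_total f d with h | h
  · rw [min_eq_left h, max_eq_left (sub_nonneg.mpr h), add_sub_cancel]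
  · rw [min_eq_right h, max_eq_right (sub_nonpos.mpr h), add_zero]

theorem max_sub_zero_le_of_abs_sub_le [AddCommGroup R] [LinearOrder R] [IsOrderedAddMonoid R]
    {d₁ d₂ f q₁ q₂ : R} (hsum : q₁ + q₂ = d₁ + d₂) (htransfer : |q₁ - d₁| ≤ f)
    (hq₂ : 0 ≤ q₂) : max (d₂ - f) 0 ≤ q₂ := by
  have hexport : q₁ - d₁ ≤ f := (abs_le.mp htransfer).2
  refine max_le ?_ hq₂
  calc d₂ - f ≤ d₂ - (q₁ - d₁) := sub_le_sub_left hexport d₂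
    _ = q₂ := by rw [eq_sub_of_add_eq' hsum]; abel

theorem cost_le_of_le_of_add_eq [CommRing R] [LinearOrder R] [IsStrictOrderedRing R]
    {α₁ α₂ p₁ p₂ q₁ q₂ : R} (hα : α₁ ≤ α₂) (hsum : p₁ + p₂ = q₁ + q₂) (h₂ : p₂ ≤ q₂) :
    α₁ * p₁ + α₂ * p₂ ≤ α₁ * q₁ + α₂ * q₂ := by
  have hdiff : α₁ * q₁ + α₂ * q₂ - (α₁ * p₁ + α₂ * p₂) = (α₂ - α₁) * (q₂ - p₂) := by
    rw [eq_sub_of_add_eq hsum]; ring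
  exact sub_nonneg.mp (hdiff ▸ mul_nonneg (sub_nonneg.mpr hα) (sub_nonneg.mpr h₂))

end Dispatch

theorem stmt_16_general (α₁ α₂ d₁ d₂ f qbar₁ : ℝ)
    (hα : α₁ ≤ α₂) (hd₁ : 0 ≤ d₁) (hd₂ : 0 ≤ d₂)
    (hf : 0 < f) (hq : d₁ + d₂ ≤ qbar₁) :
    (0 ≤ d₁ + min f d₂ ∧ d₁ + min f d₂ ≤ qbar₁ ∧ 0 ≤ max (d₂ - f) 0 ∧
      (d₁ + min f d₂) + max (d₂ - f) 0 = d₁ + d₂ ∧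
      |(d₁ + min f d₂) - d₁| ≤ f) ∧
    (∀ q₁ q₂ : ℝ, 0 ≤ q₁ → q₁ ≤ qbar₁ → 0 ≤ q₂ → q₁ + q₂ = d₁ + d₂ →
      |q₁ - d₁| ≤ f →
      α₁ * (d₁ + min f d₂) + α₂ * max (d₂ - f) 0 ≤ α₁ * q₁ + α₂ * q₂) := by
  have hmin : 0 ≤ min f d₂ := le_min hf.le hd₂
  have hbalance : (d₁ + min f d₂) + max (d₂ - f) 0 = d₁ + d₂ := by
    rw [add_assoc, min_add_max_sub_zero]
  refine ⟨⟨by positivity, ?_, le_max_right _ _, hbalance, ?_⟩, ?_⟩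
  · linarith [min_le_right f d₂]
  · rw [add_sub_cancel_left, abs_of_nonneg hmin]
    exact min_le_left f d₂
  · intro q₁ q₂ _ _ hq₂ hsum htransfer
    exact cost_le_of_le_of_add_eq hα (hbalance.trans hsum.symm)
      (max_sub_zero_le_of_abs_sub_le hsum htransfer hq₂)

theorem stmt_16 (α₁ α₂ d₁ d₂ f qbar₁ : ℝ)
    (hα₁ : 0 < α₁) (hα : α₁ ≤ α₂) (hd₁ : 0 ≤ d₁) (hd₂ : 0 ≤ d₂)
    (hf : 0 < f) (hq : d₁ + d₂ ≤ qbar₁) :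
    (0 ≤ d₁ + min f d₂ ∧ d₁ + min f d₂ ≤ qbar₁ ∧ 0 ≤ max (d₂ - f) 0 ∧
      (d₁ + min f d₂) + max (d₂ - f) 0 = d₁ + d₂ ∧
      |(d₁ + min f d₂) - d₁| ≤ f) ∧
    (∀ q₁ q₂ : ℝ, 0 ≤ q₁ → q₁ ≤ qbar₁ → 0 ≤ q₂ → q₁ + q₂ = d₁ + d₂ →
      |q₁ - d₁| ≤ f →
      α₁ * (d₁ + min f d₂) + α₂ * max (d₂ - f) 0 ≤ α₁ * q₁ + α₂ * q₂) :=
  stmt_16_general α₁ α₂ d₁ d₂ f qbar₁ hα hd₁ hd₂ hf hq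
end

section
/- (Lemma 1, impact of generation capacity, reduced form) Consider the 2-bus costs with capacity constraint: for cheap capacity Q > 0, define C(Q, f) as the minimum of α₁q₁ + α₂q₂ over q₁ ∈ [0, Q], q₂ ≥ 0, q₁ + q₂ = d, |q₁ - d₁| ≤ f (with d = d₁ + d₂ fixed and both problems feasible). If Q' ≤ Q, then C(Q', f^sc)/C(Q', f^ed) ≤ C(Q, f^sc)/C(Q, f^ed). That is, reducing cheap generation capacity cannot increase the price of security. -/
/-- Feasible set of the capacity-constrained 2-bus dispatch:
cheap output `p.1 ∈ [0, Q]`, expensive output `p.2 ≥ 0`, balance, transfer limit `f`. -/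
def Feas (d₁ d₂ Q f : ℝ) : Set (ℝ × ℝ) :=
  {p | 0 ≤ p.1 ∧ p.1 ≤ Q ∧ 0 ≤ p.2 ∧ p.1 + p.2 = d₁ + d₂ ∧ |p.1 - d₁| ≤ f}

/-- Optimal dispatch cost with cheap capacity `Q` and transfer limit `f`. -/
noncomputable def C (α₁ α₂ d₁ d₂ Q f : ℝ) : ℝ :=
  sInf ((fun p : ℝ × ℝ => α₁ * p.1 + α₂ * p.2) '' Feas d₁ d₂ Q f)

/-!
With `m = min Q (min (d₁ + d₂) (d₁ + f))` the largest feasible cheap output, the optimal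
cost is `α₂ (d₁ + d₂) - (α₂ - α₁) m`, an antitone function `g` of `m`. The price of security
is `g (min Q x) / g (min Q y)` with `x ≤ y` the transfer-limited bounds under the two limits.
If the capacity `Q` binds below `x`, this ratio is `1`, the least possible value; otherwise
the numerator does not depend on `Q`, while the denominator only grows as `Q` shrinks.
-/

lemma Feas_mono {d₁ d₂ Q Q' f f' : ℝ} (hQ : Q' ≤ Q) (hf : f' ≤ f) :
    Feas d₁ d₂ Q' f' ⊆ Feas d₁ d₂ Q f :=
  fun _ ⟨h₀, hQ', h₂, hbal, htr⟩ => ⟨h₀, hQ'.trans hQ, h₂, hbal, htr.trans hf⟩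

lemma fst_le_of_mem_Feas {d₁ d₂ Q f : ℝ} {p : ℝ × ℝ} (hp : p ∈ Feas d₁ d₂ Q f) :
    p.1 ≤ min Q (min (d₁ + d₂) (d₁ + f)) := by
  obtain ⟨-, hQ, h₂, hbal, htr⟩ := hp
  have := (abs_le.mp htr).2
  exact le_min hQ (le_min (by linarith) (by linarith))

lemma mem_Feas_min {d₁ d₂ Q f : ℝ} (h : (Feas d₁ d₂ Q f).Nonempty) :
    (min Q (min (d₁ + d₂) (d₁ + f)), d₁ + d₂ - min Q (min (d₁ + d₂) (d₁ + f))) ∈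
      Feas d₁ d₂ Q f := by
  obtain ⟨p, hp⟩ := h
  have hpm := fst_le_of_mem_Feas hp
  obtain ⟨h₀, -, -, -, htr⟩ := hp
  have := (abs_le.mp htr).1
  have hmd : min Q (min (d₁ + d₂) (d₁ + f)) ≤ d₁ + d₂ :=
    (min_le_right _ _).trans (min_le_left _ _)
  have hmf : min Q (min (d₁ + d₂) (d₁ + f)) ≤ d₁ + f :=
    (min_le_right _ _).trans (min_le_right _ _)
  exact ⟨h₀.trans hpm, min_le_left _ _, sub_nonneg.mpr hmd, add_sub_cancel _ _,
    abs_le.mpr ⟨by linarith, by linarith⟩⟩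

theorem C_eq {α₁ α₂ d₁ d₂ Q f : ℝ} (hα : α₁ ≤ α₂) (h : (Feas d₁ d₂ Q f).Nonempty) :
    C α₁ α₂ d₁ d₂ Q f = α₂ * (d₁ + d₂) - (α₂ - α₁) * min Q (min (d₁ + d₂) (d₁ + f)) := by
  refine IsLeast.csInf_eq ⟨⟨_, mem_Feas_min h, by ring⟩, ?_⟩
  rintro _ ⟨p, hp, rfl⟩
  have hpm := mul_le_mul_of_nonneg_left (fst_le_of_mem_Feas hp) (sub_nonneg.mpr hα)
  have hbal : p.2 = d₁ + d₂ - p.1 := eq_sub_of_add_eq' hp.2.2.2.1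
  simp only [hbal]
  linarith

lemma div_le_div_of_antitone_min {g : ℝ → ℝ} (hg : Antitone g) {Q Q' x y : ℝ}
    (hQ : Q' ≤ Q) (hxy : x ≤ y) (hpos : 0 < g (min Q y)) :
    g (min Q' x) / g (min Q' y) ≤ g (min Q x) / g (min Q y) := by
  have hy : g (min Q y) ≤ g (min Q' y) := hg (min_le_min_right y hQ)
  rcases le_total Q' x with hQ'x | hxQ'
  · have hQ'y : min Q' y = Q' := min_eq_left (hQ'x.trans hxy)
    rw [hQ'y] at hy
    rw [min_eq_left hQ'x, hQ'y, div_self (hpos.trans_le hy).ne']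
    exact (one_le_div hpos).mpr (hg (min_le_min_left Q hxy))
  · rw [min_eq_right hxQ', min_eq_right (hxQ'.trans hQ)]
    exact div_le_div_of_nonneg_left (hpos.le.trans (hg (le_min (hxQ'.trans hQ) hxy))) hpos hy

theorem stmt_18_general (α₁ α₂ d₁ d₂ fsc fed Q Q' : ℝ)
    (hα₁ : 0 < α₁) (hα : α₁ ≤ α₂)
    (hd : 0 < d₁ + d₂) (hf : fsc ≤ fed)
    (hQ : Q' ≤ Q)
    (hfeas : (Feas d₁ d₂ Q' fsc).Nonempty) :
    C α₁ α₂ d₁ d₂ Q' fsc / C α₁ α₂ d₁ d₂ Q' fed ≤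
      C α₁ α₂ d₁ d₂ Q fsc / C α₁ α₂ d₁ d₂ Q fed := by
  have feas {Q₀ f₀ : ℝ} (hQ₀ : Q' ≤ Q₀) (hf₀ : fsc ≤ f₀) : (Feas d₁ d₂ Q₀ f₀).Nonempty :=
    hfeas.mono (Feas_mono hQ₀ hf₀)
  rw [C_eq hα hfeas, C_eq hα (feas le_rfl hf), C_eq hα (feas hQ le_rfl), C_eq hα (feas hQ hf)]
  set g : ℝ → ℝ := fun z => α₂ * (d₁ + d₂) - (α₂ - α₁) * z
  have hg : Antitone g := fun a b hab =>
    sub_le_sub_left (mul_le_mul_of_nonneg_left hab (sub_nonneg.mpr hα)) _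
  have hpos : 0 < g (min Q (min (d₁ + d₂) (d₁ + fed))) := by
    have hm : min Q (min (d₁ + d₂) (d₁ + fed)) ≤ d₁ + d₂ :=
      (min_le_right _ _).trans (min_le_left _ _)
    calc 0 < α₁ * (d₁ + d₂) := mul_pos hα₁ hd
      _ = g (d₁ + d₂) := by ring
      _ ≤ _ := hg hm
  exact div_le_div_of_antitone_min hg hQ (min_le_min_left _ (by linarith)) hpos

theorem stmt_18 (α₁ α₂ d₁ d₂ fsc fed Q Q' : ℝ)
    (hα₁ : 0 < α₁) (hα : α₁ ≤ α₂) (hd₁ : 0 ≤ d₁) (hd₂ : 0 ≤ d₂)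
    (hd : 0 < d₁ + d₂) (hfsc : 0 < fsc) (hf : fsc ≤ fed)
    (hQ' : 0 < Q') (hQ : Q' ≤ Q)
    (hfeas : (Feas d₁ d₂ Q' fsc).Nonempty) :
    C α₁ α₂ d₁ d₂ Q' fsc / C α₁ α₂ d₁ d₂ Q' fed ≤
      C α₁ α₂ d₁ d₂ Q fsc / C α₁ α₂ d₁ d₂ Q fed :=
  stmt_18_general α₁ α₂ d₁ d₂ fsc fed Q Q' hα₁ hα hd hf hQ hfeas
end
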